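/- Let ∇ ⊂ ℝ⁴ be defined by x,y,z,w ≥ 0, 1-x-y ≥ 0, x+y-z ≥ 0, x+y-w ≥ 0. For every positive integer n, the number of lattice points in n∇ equals C(n+4,4) + 4·C(n+3,4) + C(n+2,4) = (6n⁴ + 36n³ + 78n² + 72n + 24)/24. -/

import Mathlib

/-!
For `t ≥ 0`, the dilate `t • nabla` is cut out by `0 ≤ x, y, z, w`, `x + y ≤ t` and
`z, w ≤ x + y`. Slicing its lattice points by `s = x + y ∈ [0, n]`, each slice is parametrised by
`(x, z, w) ∈ [0, s]³`, so there are `∑ₛ (s + 1)³ = ((n + 1)(n + 2) / 2)²` of them; expanding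
`C(m, 4) = m(m-1)(m-2)(m-3)/24` shows that the binomial expression is the same quartic.
-/

open Pointwise

def nabla : Set (ℝ × ℝ × ℝ × ℝ) :=
  {p : ℝ × ℝ × ℝ × ℝ |
    0 ≤ p.1 ∧
    0 ≤ p.2.1 ∧
    0 ≤ p.2.2.1 ∧
    0 ≤ p.2.2.2 ∧
    0 ≤ 1 - p.1 - p.2.1 ∧
    0 ≤ p.1 + p.2.1 - p.2.2.1 ∧
    0 ≤ p.1 + p.2.1 - p.2.2.2}

open Finset

lemma cast_choose_four (m : ℕ) : (m.choose 4 : ℚ) = m * (m - 1) * (m - 2) * (m - 3) / 24 := by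
  have h := descPochhammer_eval_eq_descFactorial ℚ m 4
  rw [Nat.descFactorial_eq_factorial_mul_choose] at h
  simp only [descPochhammer_succ_right, descPochhammer_zero, Polynomial.eval_mul,
    Polynomial.eval_sub, Polynomial.eval_X, Polynomial.eval_natCast, Polynomial.eval_one,
    Nat.cast_mul, Nat.factorial] at h
  push_cast at h
  linear_combination -h / 24

lemma four_mul_sum_range_succ_pow_three (n : ℕ) :
    4 * ∑ s ∈ range (n + 1), (s + 1) ^ 3 = ((n + 1) * (n + 2)) ^ 2 := by
  induction n with
  | zero => simp
  | succ n ih => rw [sum_range_succ, mul_add, ih]; ring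

lemma mem_smul_nabla {t : ℝ} (ht : 0 ≤ t) (p : ℝ × ℝ × ℝ × ℝ) :
    p ∈ t • nabla ↔ 0 ≤ p.1 ∧ 0 ≤ p.2.1 ∧ 0 ≤ p.2.2.1 ∧ 0 ≤ p.2.2.2 ∧
      p.1 + p.2.1 ≤ t ∧ p.2.2.1 ≤ p.1 + p.2.1 ∧ p.2.2.2 ≤ p.1 + p.2.1 := by
  obtain ⟨a, b, c, d⟩ := p
  rcases ht.eq_or_lt with rfl | ht
  · rw [Set.zero_smul_set ⟨0, by simp [nabla]⟩]
    simp only [Set.mem_zero, Prod.mk_eq_zero]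
    constructor
    · rintro ⟨rfl, rfl, rfl, rfl⟩; norm_num
    · rintro ⟨h1, h2, h3, h4, h5, h6, h7⟩; refine ⟨?_, ?_, ?_, ?_⟩ <;> linarith
  · rw [Set.mem_smul_set_iff_inv_smul_mem₀ ht.ne']
    simp only [nabla, Set.mem_ofPred_eq, Prod.smul_mk, smul_eq_mul, sub_sub, ← mul_add,
      mul_nonneg_iff_of_pos_left (inv_pos.2 ht), sub_nonneg, inv_mul_le_one₀ ht,
      mul_le_mul_iff_right₀ (inv_pos.2 ht)]

def latticeSlice (s : ℕ) : Finset (ℤ × ℤ × ℤ × ℤ) :=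
  (range (s + 1) ×ˢ range (s + 1) ×ˢ range (s + 1)).image
    fun t => (t.1, s - t.1, t.2.1, t.2.2)

lemma mem_latticeSlice {s : ℕ} {v : ℤ × ℤ × ℤ × ℤ} :
    v ∈ latticeSlice s ↔ 0 ≤ v.1 ∧ 0 ≤ v.2.1 ∧ 0 ≤ v.2.2.1 ∧ 0 ≤ v.2.2.2 ∧
      v.1 + v.2.1 = s ∧ v.2.2.1 ≤ s ∧ v.2.2.2 ≤ s := by
  obtain ⟨a, b, c, d⟩ := v
  simp only [latticeSlice, mem_image, mem_product, mem_range, Prod.ext_iff, Prod.exists]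
  constructor
  · rintro ⟨x, y, z, ⟨hx, hy, hz⟩, rfl, hb, rfl, rfl⟩; omega
  · intro h
    exact ⟨a.toNat, c.toNat, d.toNat, by omega⟩

lemma card_latticeSlice (s : ℕ) : #(latticeSlice s) = (s + 1) ^ 3 := by
  rw [latticeSlice, card_image_of_injective]
  · simp only [card_product, card_range]; ring
  · intro t u h
    simp only [Prod.ext_iff, Nat.cast_inj] at h ⊢
    omega

def latticePoints (n : ℕ) : Finset (ℤ × ℤ × ℤ × ℤ) := (range (n + 1)).biUnion latticeSlice

lemma mem_latticePoints {n : ℕ} {v : ℤ × ℤ × ℤ × ℤ} :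
    v ∈ latticePoints n ↔ 0 ≤ v.1 ∧ 0 ≤ v.2.1 ∧ 0 ≤ v.2.2.1 ∧ 0 ≤ v.2.2.2 ∧
      v.1 + v.2.1 ≤ n ∧ v.2.2.1 ≤ v.1 + v.2.1 ∧ v.2.2.2 ≤ v.1 + v.2.1 := by
  simp only [latticePoints, mem_biUnion, mem_range, mem_latticeSlice]
  constructor
  · rintro ⟨s, hs, h⟩; omega
  · intro h; exact ⟨(v.1 + v.2.1).toNat, by omega⟩

lemma card_latticePoints (n : ℕ) : #(latticePoints n) = ∑ s ∈ range (n + 1), (s + 1) ^ 3 := by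
  rw [latticePoints, card_biUnion]
  · simp_rw [card_latticeSlice]
  · intro s _ t _ hst
    simp only [Function.onFun, disjoint_left, mem_latticeSlice]
    omega

lemma four_mul_choose_sum (n : ℕ) :
    4 * ((n + 4).choose 4 + 4 * (n + 3).choose 4 + (n + 2).choose 4) = ((n + 1) * (n + 2)) ^ 2 := by
  have h : (4 * ((n + 4).choose 4 + 4 * (n + 3).choose 4 + (n + 2).choose 4) : ℚ)
      = ((n + 1) * (n + 2)) ^ 2 := by
    simp only [cast_choose_four]; push_cast; ring
  exact_mod_cast h

lemma setOf_intCast_mem_smul_nabla (n : ℕ) :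
    {v : ℤ × ℤ × ℤ × ℤ | ((v.1 : ℝ), (v.2.1 : ℝ), (v.2.2.1 : ℝ), (v.2.2.2 : ℝ)) ∈ (n : ℝ) • nabla}
      = latticePoints n := by
  ext v
  simp only [Set.mem_ofPred_eq, mem_coe, mem_smul_nabla n.cast_nonneg, mem_latticePoints]
  norm_cast

theorem stmt12_general (n : ℕ) :
    {v : ℤ × ℤ × ℤ × ℤ | (((v.1 : ℝ), (v.2.1 : ℝ), (v.2.2.1 : ℝ), (v.2.2.2 : ℝ)) : ℝ × ℝ × ℝ × ℝ) ∈ (n : ℝ) • nabla}.ncard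
        = Nat.choose (n + 4) 4 + 4 * Nat.choose (n + 3) 4 + Nat.choose (n + 2) 4 ∧
      ((Nat.choose (n + 4) 4 + 4 * Nat.choose (n + 3) 4 + Nat.choose (n + 2) 4 : ℚ))
        = (6 * (n : ℚ) ^ 4 + 36 * (n : ℚ) ^ 3 + 78 * (n : ℚ) ^ 2 + 72 * (n : ℚ) ^ 1 + 24) / 24 := by
  refine ⟨?_, by simp only [cast_choose_four]; push_cast; ring⟩
  rw [setOf_intCast_mem_smul_nabla, Set.ncard_coe_finset, card_latticePoints]
  apply Nat.eq_of_mul_eq_mul_left four_pos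
  rw [four_mul_sum_range_succ_pow_three, four_mul_choose_sum]

theorem stmt12 (n : ℕ) (hn : 0 < n) :
    {v : ℤ × ℤ × ℤ × ℤ | (((v.1 : ℝ), (v.2.1 : ℝ), (v.2.2.1 : ℝ), (v.2.2.2 : ℝ)) : ℝ × ℝ × ℝ × ℝ) ∈ (n : ℝ) • nabla}.ncard
        = Nat.choose (n + 4) 4 + 4 * Nat.choose (n + 3) 4 + Nat.choose (n + 2) 4 ∧
      ((Nat.choose (n + 4) 4 + 4 * Nat.choose (n + 3) 4 + Nat.choose (n + 2) 4 : ℚ))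
        = (6 * (n : ℚ) ^ 4 + 36 * (n : ℚ) ^ 3 + 78 * (n : ℚ) ^ 2 + 72 * (n : ℚ) ^ 1 + 24) / 24 :=
  stmt12_general n
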